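/- Let E be a finite-dimensional real inner product space, and let φ : E → ℝ be differentiable, strictly convex, and supercoercive (φ(x)/‖x‖ → ∞ as ‖x‖ → ∞). Let V ⊆ E be a linear subspace and x₀, yᴾ ∈ E. Let x_EQ be the unique point of x₀ + V with ∇φ(x_EQ) − yᴾ ∈ V^⊥, and let x_P ∈ E be any point with ∇φ(x_P) − yᴾ ∈ V^⊥. Then x_EQ is the unique minimizer of x ↦ D[x‖x_P] over the affine subspace x₀ + V: for every x ∈ x₀ + V with x ≠ x_EQ, D[x‖x_P] > D[x_EQ‖x_P]. -/

import Mathlib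

open scoped RealInnerProductSpace

/-!
Along `x₀ + V`, the divergences from `xP` and from `xEQ` differ by the constant `D[xEQ‖xP]`:
their difference is affine with slope `∇φ xEQ - ∇φ xP ∈ Vᗮ`. Strict convexity makes
`D[x‖xEQ]` positive for `x ≠ xEQ`.
-/

theorem StrictConvexOn.comp_affineMap {𝕜 E F β : Type*} [Ring 𝕜] [PartialOrder 𝕜]
    [AddCommGroup E] [AddCommGroup F] [AddCommMonoid β] [PartialOrder β]
    [Module 𝕜 E] [Module 𝕜 F] [SMul 𝕜 β] {f : F → β} {g : E →ᵃ[𝕜] F}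
    (hg : Function.Injective g) {s : Set F} (hf : StrictConvexOn 𝕜 s f) :
    StrictConvexOn 𝕜 (g ⁻¹' s) (f ∘ g) :=
  ⟨hf.1.affine_preimage _, fun x hx y hy hxy a b ha hb hab =>
    calc
      (f ∘ g) (a • x + b • y) = f (a • g x + b • g y) := by
        rw [Function.comp_apply, Convex.combo_affine_apply hab]
      _ < a • f (g x) + b • f (g y) := hf.2 hx hy (hg.ne hxy) ha hb hab⟩

open AffineMap in
theorem StrictConvexOn.add_apply_sub_lt {E : Type*} [NormedAddCommGroup E] [NormedSpace ℝ E]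
    {f : E → ℝ} {f' : E →L[ℝ] ℝ} {s : Set E} {x y : E} (hf : StrictConvexOn ℝ s f)
    (hf' : HasFDerivAt f f' y) (hx : x ∈ s) (hy : y ∈ s) (hxy : x ≠ y) :
    f y + f' (x - y) < f x := by
  have hline : StrictConvexOn ℝ (lineMap y x ⁻¹' s) (f ∘ lineMap y x) :=
    hf.comp_affineMap (lineMap_injective ℝ hxy.symm)
  have hderiv : HasDerivAt (f ∘ lineMap y x) (f' (x - y)) (0 : ℝ) :=
    hf'.comp_hasDerivAt_of_eq 0 hasDerivAt_lineMap (lineMap_apply_zero y x).symm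
  have := hline.lt_slope_of_hasDerivAt (x := 0) (y := 1) (by simpa) (by simpa) zero_lt_one hderiv
  simpa [slope_def_field, lineMap_apply_one, lineMap_apply_zero, lt_sub_iff_add_lt'] using this

noncomputable def bregmanDiv {E : Type*} [NormedAddCommGroup E] [InnerProductSpace ℝ E]
    [CompleteSpace E] (φ : E → ℝ) (x x' : E) : ℝ :=
  φ x - φ x' - ⟪gradient φ x', x - x'⟫

section Bregman

variable {E : Type*} [NormedAddCommGroup E] [InnerProductSpace ℝ E] [CompleteSpace E]
  {φ : E → ℝ}

theorem bregmanDiv_sub_bregmanDiv (φ : E → ℝ) (x y z : E) :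
    bregmanDiv φ x z - bregmanDiv φ y z =
      bregmanDiv φ x y + ⟪gradient φ y - gradient φ z, x - y⟫ := by
  simp only [bregmanDiv, inner_sub_left, inner_sub_right]
  ring

theorem bregmanDiv_pos {s : Set E} (hconv : StrictConvexOn ℝ s φ) {x y : E}
    (hφ : DifferentiableAt ℝ φ y) (hx : x ∈ s) (hy : y ∈ s) (hxy : x ≠ y) :
    0 < bregmanDiv φ x y := by
  have := hconv.add_apply_sub_lt hφ.hasGradientAt.hasFDerivAt hx hy hxy
  rw [InnerProductSpace.toDual_apply_apply] at this
  unfold bregmanDiv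
  linarith

end Bregman

theorem equilibrium_minimizes_divergence_on_stoichiometric_manifold_general
    {E : Type*} [NormedAddCommGroup E] [InnerProductSpace ℝ E] [FiniteDimensional ℝ E]
    (φ : E → ℝ) (hdiff : Differentiable ℝ φ)
    (hconv : StrictConvexOn ℝ Set.univ φ)
    (V : Submodule ℝ E) (x₀ yP xEQ xP : E)
    (hEQmem : xEQ - x₀ ∈ V) (hEQ : gradient φ xEQ - yP ∈ Vᗮ)
    (hP : gradient φ xP - yP ∈ Vᗮ) :
    ∀ x : E, x - x₀ ∈ V → x ≠ xEQ →
      φ xEQ - φ xP - ⟪gradient φ xP, xEQ - xP⟫ <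
        φ x - φ xP - ⟪gradient φ xP, x - xP⟫ := by
  intro x hx hne
  show bregmanDiv φ xEQ xP < bregmanDiv φ x xP
  have hdir : x - xEQ ∈ V := by simpa using V.sub_mem hx hEQmem
  have hgrad : gradient φ xEQ - gradient φ xP ∈ Vᗮ := by simpa using Vᗮ.sub_mem hEQ hP
  have horth : ⟪gradient φ xEQ - gradient φ xP, x - xEQ⟫ = 0 :=
    Submodule.inner_left_of_mem_orthogonal hdir hgrad
  have hsplit := bregmanDiv_sub_bregmanDiv φ x xEQ xP
  rw [horth, add_zero] at hsplit
  linarith [bregmanDiv_pos hconv (hdiff xEQ) trivial trivial hne]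

/-- **The equilibrium state minimizes the divergence over the stoichiometric manifold.**
Let `φ` be differentiable, strictly convex and supercoercive on a finite-dimensional real
inner product space, `V` a linear subspace, `xEQ` the point of `x₀ + V` with
`∇φ xEQ - yP ∈ Vᗮ`, and `xP` any point with `∇φ xP - yP ∈ Vᗮ`.  Then `xEQ` is the
unique minimizer of `x ↦ D[x‖xP]` over `x₀ + V`. -/
theorem equilibrium_minimizes_divergence_on_stoichiometric_manifold
    {E : Type*} [NormedAddCommGroup E] [InnerProductSpace ℝ E] [FiniteDimensional ℝ E]
    (φ : E → ℝ) (hdiff : Differentiable ℝ φ)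
    (hconv : StrictConvexOn ℝ Set.univ φ)
    (hcoer : Filter.Tendsto (fun x => φ x / ‖x‖) (Filter.cocompact E) Filter.atTop)
    (V : Submodule ℝ E) (x₀ yP xEQ xP : E)
    (hEQmem : xEQ - x₀ ∈ V) (hEQ : gradient φ xEQ - yP ∈ Vᗮ)
    (hP : gradient φ xP - yP ∈ Vᗮ) :
    ∀ x : E, x - x₀ ∈ V → x ≠ xEQ →
      φ xEQ - φ xP - ⟪gradient φ xP, xEQ - xP⟫ <
        φ x - φ xP - ⟪gradient φ xP, x - xP⟫ :=
  equilibrium_minimizes_divergence_on_stoichiometric_manifold_general φ hdiff hconv V x₀ yP xEQ xP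
    hEQmem hEQ hP
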